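/- arXiv:math/0411659 — 5 statements merged into one kernel-verified Lean document; each statement's English description precedes it below -/
import Mathlib

section
/- Let f : ℝ → ℝ be Lipschitz with Lipschitz constant L_f, and let L > L_f and δ > 0. Define u(x) = sup over y ∈ ℝ of [f(y) - L·√(δ² + (x-y)²)]. Then for every x the supremum is attained and equals the maximum over y with |y - x| ≤ D·δ, where D = 2·L·L_f/(L² - L_f²). -/
open Real

theorem stmt0 (f : ℝ → ℝ) (Lf L δ : ℝ) (hLf : 0 ≤ Lf) (hL : Lf < L) (hδ : 0 < δ)
    (hlip : ∀ y y', |f y - f y'| ≤ Lf * |y - y'|) (x : ℝ) :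
    ∃ y₀ : ℝ, |y₀ - x| ≤ (2 * L * Lf / (L ^ 2 - Lf ^ 2)) * δ ∧
      (∀ y : ℝ, f y - L * Real.sqrt (δ ^ 2 + (x - y) ^ 2)
        ≤ f y₀ - L * Real.sqrt (δ ^ 2 + (x - y₀) ^ 2)) ∧
      sSup (Set.range fun y : ℝ => f y - L * Real.sqrt (δ ^ 2 + (x - y) ^ 2))
        = f y₀ - L * Real.sqrt (δ ^ 2 + (x - y₀) ^ 2) := by
  set D : ℝ := 2 * L * Lf / (L ^ 2 - Lf ^ 2) with hD
  have hLpos : 0 < L := lt_of_le_of_lt hLf hL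
  have hden : 0 < L ^ 2 - Lf ^ 2 := by nlinarith
  have hDnn : 0 ≤ D := by positivity
  have hDδ : 0 ≤ D * δ := mul_nonneg hDnn hδ.le
  set g : ℝ → ℝ := fun y => f y - L * Real.sqrt (δ ^ 2 + (x - y) ^ 2) with hg
  have hfc : Continuous f := by
    have : LipschitzWith (Real.toNNReal Lf) f := by
      apply LipschitzWith.of_dist_le_mul
      intro a b
      rw [Real.dist_eq, Real.dist_eq, Real.coe_toNNReal _ hLf]
      exact hlip a b
    exact this.continuous
  have hgc : Continuous g := by
    apply hfc.sub
    apply continuous_const.mul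
    exact Real.continuous_sqrt.comp (by continuity)
  have hxmem : x ∈ Set.Icc (x - D * δ) (x + D * δ) := by
    constructor <;> nlinarith
  obtain ⟨y₀, hy₀mem, hy₀max⟩ := isCompact_Icc.exists_isMaxOn ⟨x, hxmem⟩ hgc.continuousOn
  -- key: outside the interval, g y ≤ g x
  have hgx : g x = f x - L * δ := by
    simp only [hg, sub_self]
    rw [show (0:ℝ) ^ 2 = 0 by ring, add_zero, Real.sqrt_sq hδ.le]
  have hout : ∀ y : ℝ, D * δ ≤ |x - y| → g y ≤ g x := by
    intro y ht
    set t := |x - y| with htdef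
    have htnn : 0 ≤ t := abs_nonneg _
    have ht2 : (x - y) ^ 2 = t ^ 2 := (sq_abs _).symm
    have hs : Real.sqrt (δ ^ 2 + t ^ 2) * Real.sqrt (δ ^ 2 + t ^ 2) = δ ^ 2 + t ^ 2 :=
      Real.mul_self_sqrt (by positivity)
    have hsnn : 0 ≤ Real.sqrt (δ ^ 2 + t ^ 2) := Real.sqrt_nonneg _
    have hsge : δ ≤ Real.sqrt (δ ^ 2 + t ^ 2) := by
      have h := Real.sqrt_le_sqrt (show δ ^ 2 ≤ δ ^ 2 + t ^ 2 by nlinarith)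
      rwa [Real.sqrt_sq hδ.le] at h
    have hkey : Lf * t + L * δ ≤ L * Real.sqrt (δ ^ 2 + t ^ 2) := by
      have ht' : 2 * L * Lf * δ ≤ (L ^ 2 - Lf ^ 2) * t := by
        have h1 := mul_le_mul_of_nonneg_left ht hden.le
        have hid : (L ^ 2 - Lf ^ 2) * (D * δ) = 2 * L * Lf * δ := by
          rw [hD]; field_simp
        linarith
      have hsq : (Lf * t + L * δ) ^ 2 ≤ L ^ 2 * (δ ^ 2 + t ^ 2) := by
        nlinarith [mul_le_mul_of_nonneg_right ht' htnn]
      nlinarith [hsq, hs, mul_nonneg hLf htnn, mul_pos hLpos hδ,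
        mul_nonneg hLpos.le hsnn]
    have hf : f y - f x ≤ Lf * t := by
      have := hlip y x
      have habs : |y - x| = t := by rw [htdef, abs_sub_comm]
      calc f y - f x ≤ |f y - f x| := le_abs_self _
        _ ≤ Lf * |y - x| := this
        _ = Lf * t := by rw [habs]
    rw [hgx]
    show f y - L * Real.sqrt (δ ^ 2 + (x - y) ^ 2) ≤ f x - L * δ
    rw [ht2]
    linarith
  have hmax : ∀ y : ℝ, g y ≤ g y₀ := by
    intro y
    by_cases hy : y ∈ Set.Icc (x - D * δ) (x + D * δ)
    · exact hy₀max hy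
    · have : D * δ ≤ |x - y| := by
        simp only [Set.mem_Icc, not_and_or, not_le] at hy
        rcases hy with h | h
        · rw [abs_of_nonneg (by linarith)]; linarith
        · rw [abs_of_nonpos (by linarith)]; linarith
      exact le_trans (hout y this) (hy₀max hxmem)
  refine ⟨y₀, ?_, hmax, ?_⟩
  · rw [abs_sub_le_iff]
    obtain ⟨h1, h2⟩ := hy₀mem
    constructor <;> linarith
  · apply le_antisymm
    · exact csSup_le (Set.range_nonempty _) (by rintro _ ⟨y, rfl⟩; exact hmax y)
    · exact le_csSup ⟨g y₀, by rintro _ ⟨y, rfl⟩; exact hmax y⟩ ⟨y₀, rfl⟩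
end

section
/- For real numbers L > L_f ≥ 0, δ > 0, and y, x ∈ ℝ with |x - y| > D·δ where D = 2·L·L_f/(L² - L_f²), one has L_f·|x - y| + L·δ < L·√(δ² + (x - y)²). -/
theorem stmt1 (L Lf δ x y : ℝ) (hLf : 0 ≤ Lf) (hL : Lf < L) (hδ : 0 < δ)
    (h : |x - y| > (2 * L * Lf / (L ^ 2 - Lf ^ 2)) * δ) :
    Lf * |x - y| + L * δ < L * Real.sqrt (δ ^ 2 + (x - y) ^ 2) := by
  have hL0 : 0 < L := lt_of_le_of_lt hLf hL
  have hd : 0 < L ^ 2 - Lf ^ 2 := by nlinarith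
  have hr : 0 < |x - y| := lt_of_le_of_lt (by positivity) h
  have hkey : 2 * L * Lf * δ < (L ^ 2 - Lf ^ 2) * |x - y| := by
    rw [gt_iff_lt, div_mul_eq_mul_div, div_lt_iff₀ hd] at h
    nlinarith
  have heq : L * Real.sqrt (δ ^ 2 + (x - y) ^ 2)
      = Real.sqrt (L ^ 2 * (δ ^ 2 + (x - y) ^ 2)) := by
    rw [Real.sqrt_mul (by positivity), Real.sqrt_sq hL0.le]
  rw [heq, show (L:ℝ)^2 = L^2 from rfl]
  rw [show Lf * |x - y| + L * δ < Real.sqrt (L ^ 2 * (δ ^ 2 + (x - y) ^ 2)) ↔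
      (Lf * |x - y| + L * δ) ^ 2 < L ^ 2 * (δ ^ 2 + (x - y) ^ 2) from
    Real.lt_sqrt (by positivity)]
  nlinarith [sq_abs (x - y), mul_pos hr (sub_pos.mpr hkey)]
end

section
/- Let f' : ℝ → ℝ be Lipschitz with constant L_f' and ‖f'‖_∞ = L_f < L. Define Φ(t) = t/√(L² - t²) for |t| ≤ L_f. If δ < (L² - L_f²)^{3/2}/(L²·L_f'), then for each x ∈ ℝ the map Y ↦ δ·Φ(f'(Y + x)) is a contraction on ℝ, and hence the functional equation Y(x) = δ·Φ(f'(Y(x) + x)) has a unique solution Y(x) ∈ ℝ. -/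
open Real

lemma phi_deriv (L t : ℝ) (ht : t ^ 2 < L ^ 2) :
    HasDerivAt (fun s => s / Real.sqrt (L ^ 2 - s ^ 2))
      (L ^ 2 / ((L ^ 2 - t ^ 2) * Real.sqrt (L ^ 2 - t ^ 2))) t := by
  have h1 : 0 < L ^ 2 - t ^ 2 := by linarith
  have hs : 0 < Real.sqrt (L ^ 2 - t ^ 2) := Real.sqrt_pos.2 h1
  have hinner : HasDerivAt (fun s : ℝ => L ^ 2 - s ^ 2) (-(2 * t)) t := by
    simpa using ((hasDerivAt_pow 2 t).const_sub (L ^ 2))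
  have hsqrt : HasDerivAt (fun s : ℝ => Real.sqrt (L ^ 2 - s ^ 2))
      (1 / (2 * Real.sqrt (L ^ 2 - t ^ 2)) * (-(2 * t))) t :=
    (Real.hasDerivAt_sqrt h1.ne').comp t hinner
  have hdiv := (hasDerivAt_id t).div hsqrt hs.ne'
  refine hdiv.congr_deriv ?_; symm
  have hsq : Real.sqrt (L ^ 2 - t ^ 2) ^ 2 = L ^ 2 - t ^ 2 := Real.sq_sqrt h1.le
  simp only [id]
  field_simp
  linear_combination t ^ 2 * hsq

theorem stmt6 (f' : ℝ → ℝ) (Lf Lf' L δ : ℝ) (hLf : 0 ≤ Lf) (hL : Lf < L)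
    (hδ : 0 < δ) (hLf' : 0 < Lf')
    (hlip : ∀ a b : ℝ, |f' a - f' b| ≤ Lf' * |a - b|)
    (hbd : ∀ t : ℝ, |f' t| ≤ Lf)
    (hδ' : δ < (L ^ 2 - Lf ^ 2) ^ ((3 : ℝ) / 2) / (L ^ 2 * Lf')) (x : ℝ) :
    (∃ k : ℝ, 0 ≤ k ∧ k < 1 ∧ ∀ Y₁ Y₂ : ℝ,
      |δ * (f' (Y₁ + x) / Real.sqrt (L ^ 2 - (f' (Y₁ + x)) ^ 2)) -
        δ * (f' (Y₂ + x) / Real.sqrt (L ^ 2 - (f' (Y₂ + x)) ^ 2))| ≤ k * |Y₁ - Y₂|) ∧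
    (∃! Y : ℝ, Y = δ * (f' (Y + x) / Real.sqrt (L ^ 2 - (f' (Y + x)) ^ 2))) := by
  have hLpos : 0 < L := lt_of_le_of_lt hLf hL
  have hD : 0 < L ^ 2 - Lf ^ 2 := by nlinarith
  have hsD : 0 < Real.sqrt (L ^ 2 - Lf ^ 2) := Real.sqrt_pos.2 hD
  set M : ℝ := L ^ 2 / ((L ^ 2 - Lf ^ 2) * Real.sqrt (L ^ 2 - Lf ^ 2)) with hM
  have hMpos : 0 < M := by positivity
  set Φ : ℝ → ℝ := fun s => s / Real.sqrt (L ^ 2 - s ^ 2) with hΦ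
  -- Lipschitz bound on Φ over Icc (-Lf) Lf
  have hlipΦ : ∀ a b : ℝ, a ∈ Set.Icc (-Lf) Lf → b ∈ Set.Icc (-Lf) Lf →
      |Φ a - Φ b| ≤ M * |a - b| := by
    intro a b ha hb
    have key := (convex_Icc (-Lf) Lf).norm_image_sub_le_of_norm_hasDerivWithin_le
      (f := Φ) (f' := fun t => L ^ 2 / ((L ^ 2 - t ^ 2) * Real.sqrt (L ^ 2 - t ^ 2)))
      (C := M) (s := Set.Icc (-Lf) Lf) ?_ ?_ hb ha
    · simpa [Real.norm_eq_abs] using key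
    · intro t ht
      have ht2 : t ^ 2 < L ^ 2 := by
        rcases ht with ⟨h1, h2⟩; nlinarith
      exact (phi_deriv L t ht2).hasDerivWithinAt
    · intro t ht
      rcases ht with ⟨h1, h2⟩
      have ht2 : t ^ 2 ≤ Lf ^ 2 := by nlinarith
      have hd : 0 < L ^ 2 - t ^ 2 := by nlinarith
      have hle : (L ^ 2 - Lf ^ 2) * Real.sqrt (L ^ 2 - Lf ^ 2) ≤
          (L ^ 2 - t ^ 2) * Real.sqrt (L ^ 2 - t ^ 2) := by
        have : L ^ 2 - Lf ^ 2 ≤ L ^ 2 - t ^ 2 := by linarith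
        exact mul_le_mul this (Real.sqrt_le_sqrt this) hsD.le hd.le
      have hpos : 0 < (L ^ 2 - t ^ 2) * Real.sqrt (L ^ 2 - t ^ 2) := by positivity
      rw [Real.norm_eq_abs, abs_of_nonneg (by positivity)]
      exact div_le_div_of_nonneg_left (by positivity) (by positivity) hle
  set k : ℝ := δ * Lf' * M with hk
  have hk0 : 0 < k := by positivity
  have hrpow : (L ^ 2 - Lf ^ 2) ^ ((3 : ℝ) / 2) =
      (L ^ 2 - Lf ^ 2) * Real.sqrt (L ^ 2 - Lf ^ 2) := by
    rw [Real.sqrt_eq_rpow, ← Real.rpow_one_add' hD.le (by norm_num)]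
    norm_num
  have hk1 : k < 1 := by
    rw [hrpow] at hδ'
    have h2 : δ * Lf' * L ^ 2 < (L ^ 2 - Lf ^ 2) * Real.sqrt (L ^ 2 - Lf ^ 2) := by
      rw [lt_div_iff₀ (by positivity)] at hδ'
      nlinarith
    have hkeq : k = δ * Lf' * L ^ 2 /
        ((L ^ 2 - Lf ^ 2) * Real.sqrt (L ^ 2 - Lf ^ 2)) := by rw [hk, hM]; ring
    rw [hkeq, div_lt_one (by positivity)]
    exact h2
  have hcontr : ∀ Y₁ Y₂ : ℝ,
      |δ * Φ (f' (Y₁ + x)) - δ * Φ (f' (Y₂ + x))| ≤ k * |Y₁ - Y₂| := by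
    intro Y₁ Y₂
    have h1 : f' (Y₁ + x) ∈ Set.Icc (-Lf) Lf := abs_le.1 (hbd _)
    have h2 : f' (Y₂ + x) ∈ Set.Icc (-Lf) Lf := abs_le.1 (hbd _)
    calc |δ * Φ (f' (Y₁ + x)) - δ * Φ (f' (Y₂ + x))|
        = δ * |Φ (f' (Y₁ + x)) - Φ (f' (Y₂ + x))| := by
          rw [← mul_sub, abs_mul, abs_of_pos hδ]
      _ ≤ δ * (M * |f' (Y₁ + x) - f' (Y₂ + x)|) := by
          exact mul_le_mul_of_nonneg_left (hlipΦ _ _ h1 h2) hδ.le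
      _ ≤ δ * (M * (Lf' * |Y₁ + x - (Y₂ + x)|)) := by
          gcongr; exact hlip _ _
      _ = k * |Y₁ - Y₂| := by
          have he : Y₁ + x - (Y₂ + x) = Y₁ - Y₂ := by ring
          rw [he, hk]; ring
  constructor
  · exact ⟨k, hk0.le, hk1, hcontr⟩
  · set F : ℝ → ℝ := fun Y => δ * Φ (f' (Y + x)) with hF
    have hlipF : LipschitzWith ⟨k, hk0.le⟩ F := by
      apply LipschitzWith.of_dist_le_mul
      intro a b
      show dist (F a) (F b) ≤ k * dist a b
      simpa [Real.dist_eq, hF] using hcontr a b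
    have hC : ContractingWith ⟨k, hk0.le⟩ F := ⟨by exact_mod_cast hk1, hlipF⟩
    refine ⟨ContractingWith.fixedPoint F hC, (hC.fixedPoint_isFixedPt).symm, ?_⟩
    intro y hy
    exact hC.fixedPoint_unique hy.symm
end

section
/- Suppose Y : ℝ → ℝ satisfies Y(x) = δ·Φ(f'(Y(x) + x)) for all x, where the map a ↦ δ·Φ(f'(a)) is Lipschitz with constant δ·C < 1. Then the map y(x) := x + Y(x) is strictly monotone increasing and bijective from ℝ to ℝ. -/
theorem stmt10 (f' Y : ℝ → ℝ) (L δ C : ℝ) (hδ : 0 < δ) (hδC : δ * C < 1)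
    (hlip : ∀ a b : ℝ,
      |δ * (f' a / Real.sqrt (L ^ 2 - (f' a) ^ 2)) -
        δ * (f' b / Real.sqrt (L ^ 2 - (f' b) ^ 2))| ≤ δ * C * |a - b|)
    (hY : ∀ x : ℝ, Y x = δ * (f' (Y x + x) / Real.sqrt (L ^ 2 - (f' (Y x + x)) ^ 2))) :
    StrictMono (fun x : ℝ => x + Y x) ∧ Function.Bijective (fun x : ℝ => x + Y x) := by
  set g : ℝ → ℝ := fun a => δ * (f' a / Real.sqrt (L ^ 2 - (f' a) ^ 2)) with hg
  have hYg : ∀ x : ℝ, Y x = g (x + Y x) := by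
    intro x; rw [add_comm]; exact hY x
  have hlip' : ∀ a b : ℝ, |g a - g b| ≤ δ * C * |a - b| := hlip
  have hk : 0 ≤ δ * C := by
    have := hlip 0 1
    have h0 : (0:ℝ) ≤ |g 0 - g 1| := abs_nonneg _
    simpa using h0.trans this
  have hmono : StrictMono (fun x : ℝ => x + Y x) := by
    intro a b hab
    simp only
    by_contra h
    push_neg at h
    set s : ℝ := (a + Y a) - (b + Y b) with hs
    have hs0 : 0 ≤ s := by simp [hs]; linarith
    have habs : |Y a - Y b| ≤ δ * C * s := by
      have := hlip' (a + Y a) (b + Y b)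
      rw [← hYg a, ← hYg b] at this
      rwa [abs_of_nonneg hs0] at this
    have h1 : Y a - Y b ≤ δ * C * s := (le_abs_self _).trans habs
    have h2 : s = (a - b) + (Y a - Y b) := by ring
    nlinarith
  refine ⟨hmono, hmono.injective, ?_⟩
  intro z
  obtain ⟨x₀, hx0⟩ : ∃ x₀, x₀ = z - g z := ⟨_, rfl⟩
  refine ⟨x₀, ?_⟩
  obtain ⟨u, hu⟩ : ∃ u, u = x₀ + Y x₀ := ⟨_, rfl⟩
  have hYu : Y x₀ = g u := by rw [hu]; exact hYg x₀
  have huz : u - z = g u - g z := by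
    have h1 : u = x₀ + g u := by conv_lhs => rw [hu, hYu]
    rw [hx0] at h1
    linarith
  have : |u - z| ≤ δ * C * |u - z| :=
    calc |u - z| = |g u - g z| := by rw [huz]
    _ ≤ δ * C * |u - z| := hlip' u z
  have huz0 : u = z := by
    by_contra hne
    have : 0 < |u - z| := abs_pos.mpr (sub_ne_zero.mpr hne)
    nlinarith
  simp only []
  rw [← hu]
  exact huz0
end

section
/- Define x(y) = y - δ·f'(y)/√(L² - f'(y)²) for y ∈ ℝ, where f' is L_f'-Lipschitz, ‖f'‖_∞ = L_f < L, and δ·L²·L_f'/(L² - L_f²)^{3/2} < 1. Then x : ℝ → ℝ is a strictly increasing bi-Lipschitz bijection of ℝ. -/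
lemma aux_lip (L Lf : ℝ) (hLf : 0 ≤ Lf) (hL : Lf < L) :
    ∀ s t : ℝ, |s| ≤ Lf → |t| ≤ Lf →
      |s / Real.sqrt (L^2 - s^2) - t / Real.sqrt (L^2 - t^2)| ≤
        L^2 / (L^2 - Lf^2) ^ ((3:ℝ)/2) * |s - t| := by
  intro s t hs ht
  have hL0 : 0 < L := lt_of_le_of_lt hLf hL
  have hden : 0 < L^2 - Lf^2 := by nlinarith
  have hrw : (L^2 - Lf^2) ^ ((3:ℝ)/2) = Real.sqrt (L^2 - Lf^2) ^ 3 := by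
    rw [Real.sqrt_eq_rpow, ← Real.rpow_natCast ((L^2-Lf^2) ^ ((1:ℝ)/2)) 3,
      ← Real.rpow_mul hden.le]
    norm_num
  have key : ∀ u ∈ Set.Icc (-Lf) Lf,
      HasDerivAt (fun u => u / Real.sqrt (L^2 - u^2))
        (L^2 / (Real.sqrt (L^2 - u^2))^3) u := by
    intro u hu
    have hq : 0 < L^2 - u^2 := by
      obtain ⟨h1, h2⟩ := hu
      nlinarith
    have hs0 : 0 < Real.sqrt (L^2 - u^2) := Real.sqrt_pos.mpr hq
    have hsq : Real.sqrt (L^2 - u^2) ^ 2 = L^2 - u^2 := Real.sq_sqrt hq.le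
    have d1 : HasDerivAt (fun u : ℝ => L^2 - u^2) (-(2*u)) u := by
      simpa using ((hasDerivAt_pow 2 u).const_sub (L^2))
    have d2 : HasDerivAt (fun u : ℝ => Real.sqrt (L^2 - u^2)) (-u / Real.sqrt (L^2 - u^2)) u := by
      have := (Real.hasDerivAt_sqrt hq.ne').comp u d1
      refine this.congr_deriv ?_
      field_simp
    have d3 := (hasDerivAt_id u).div d2 hs0.ne'
    refine d3.congr_deriv ?_
    have h3 : Real.sqrt (L^2 - u^2) ^ 3 = Real.sqrt (L^2 - u^2) * (L^2 - u^2) := by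
      rw [pow_succ']; rw [hsq]
    simp only [id]
    rw [h3]
    field_simp
    nlinarith [hsq, hs0]
  have bound : ∀ u ∈ Set.Icc (-Lf) Lf,
      ‖L^2 / (Real.sqrt (L^2 - u^2))^3‖ ≤ L^2 / (L^2 - Lf^2) ^ ((3:ℝ)/2) := by
    intro u hu
    have hq : 0 < L^2 - u^2 := by obtain ⟨h1, h2⟩ := hu; nlinarith
    have hs0 : 0 < Real.sqrt (L^2 - u^2) := Real.sqrt_pos.mpr hq
    have hle : Real.sqrt (L^2 - Lf^2) ≤ Real.sqrt (L^2 - u^2) := by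
      apply Real.sqrt_le_sqrt
      obtain ⟨h1, h2⟩ := hu
      nlinarith
    rw [Real.norm_eq_abs, abs_of_nonneg (by positivity), hrw]
    have h0 : 0 < Real.sqrt (L^2 - Lf^2) := Real.sqrt_pos.mpr hden
    gcongr
  have conv : Convex ℝ (Set.Icc (-Lf) Lf) := convex_Icc _ _
  have := conv.norm_image_sub_le_of_norm_hasDerivWithin_le
    (fun u hu => (key u hu).hasDerivWithinAt) bound
    (Set.mem_Icc.mpr ⟨neg_le_of_abs_le ht, le_of_abs_le ht⟩)
    (Set.mem_Icc.mpr ⟨neg_le_of_abs_le hs, le_of_abs_le hs⟩)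
  simpa [Real.norm_eq_abs] using this


theorem stmt11 (f' : ℝ → ℝ) (L Lf Lf' δ : ℝ) (hLf : 0 ≤ Lf) (hL : Lf < L)
    (hδ : 0 < δ) (hLf' : 0 < Lf')
    (hlip : ∀ a b : ℝ, |f' a - f' b| ≤ Lf' * |a - b|)
    (hbd : ∀ t : ℝ, |f' t| ≤ Lf)
    (hsmall : δ * L ^ 2 * Lf' / (L ^ 2 - Lf ^ 2) ^ ((3 : ℝ) / 2) < 1) :
    StrictMono (fun y : ℝ => y - δ * f' y / Real.sqrt (L ^ 2 - (f' y) ^ 2)) ∧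
    Function.Bijective (fun y : ℝ => y - δ * f' y / Real.sqrt (L ^ 2 - (f' y) ^ 2)) ∧
    ∃ K : ℝ, 1 ≤ K ∧ ∀ a b : ℝ,
      (1 / K) * |a - b| ≤
        |(a - δ * f' a / Real.sqrt (L ^ 2 - (f' a) ^ 2)) -
          (b - δ * f' b / Real.sqrt (L ^ 2 - (f' b) ^ 2))| ∧
      |(a - δ * f' a / Real.sqrt (L ^ 2 - (f' a) ^ 2)) -
          (b - δ * f' b / Real.sqrt (L ^ 2 - (f' b) ^ 2))| ≤ K * |a - b| := by
  have hL0 : 0 < L := lt_of_le_of_lt hLf hL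
  have hden : 0 < L^2 - Lf^2 := by nlinarith
  set c : ℝ := δ * L ^ 2 * Lf' / (L ^ 2 - Lf ^ 2) ^ ((3 : ℝ) / 2) with hcdef
  have hc0 : 0 < c := by
    apply div_pos (by positivity)
    positivity
  have hc1 : c < 1 := hsmall
  set g : ℝ → ℝ := fun y => δ * f' y / Real.sqrt (L ^ 2 - (f' y) ^ 2) with hgdef
  -- Lipschitz bound for g
  have hglip : ∀ a b : ℝ, |g a - g b| ≤ c * |a - b| := by
    intro a b
    have h1 := aux_lip L Lf hLf hL (f' a) (f' b) (hbd a) (hbd b)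
    have h2 : g a - g b = δ * (f' a / Real.sqrt (L^2 - (f' a)^2) - f' b / Real.sqrt (L^2 - (f' b)^2)) := by
      simp only [hgdef]; ring
    rw [h2, abs_mul, abs_of_pos hδ]
    calc δ * |f' a / Real.sqrt (L^2 - (f' a)^2) - f' b / Real.sqrt (L^2 - (f' b)^2)|
        ≤ δ * (L^2 / (L^2 - Lf^2) ^ ((3:ℝ)/2) * |f' a - f' b|) := by
          apply mul_le_mul_of_nonneg_left h1 hδ.le
      _ ≤ δ * (L^2 / (L^2 - Lf^2) ^ ((3:ℝ)/2) * (Lf' * |a - b|)) := by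
          apply mul_le_mul_of_nonneg_left _ hδ.le
          apply mul_le_mul_of_nonneg_left (hlip a b) (by positivity)
      _ = c * |a - b| := by rw [hcdef]; ring
  set x : ℝ → ℝ := fun y : ℝ => y - δ * f' y / Real.sqrt (L ^ 2 - (f' y) ^ 2) with hxdef
  have hxg : ∀ y, x y = y - g y := fun y => rfl
  -- lower and upper bounds
  have hlow : ∀ a b : ℝ, (1 - c) * |a - b| ≤ |x a - x b| := by
    intro a b
    have h1 : |a - b| - |g a - g b| ≤ |(a - b) - (g a - g b)| := by
      have := abs_sub_abs_le_abs_sub (a - b) (g a - g b)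
      linarith [this]
    have h2 : x a - x b = (a - b) - (g a - g b) := by simp only [hxg]; ring
    rw [h2]
    nlinarith [hglip a b, abs_nonneg (a - b)]
  have hup : ∀ a b : ℝ, |x a - x b| ≤ (1 + c) * |a - b| := by
    intro a b
    have h2 : x a - x b = (a - b) - (g a - g b) := by simp only [hxg]; ring
    rw [h2]
    calc |(a - b) - (g a - g b)| ≤ |a - b| + |g a - g b| := abs_sub _ _
      _ ≤ |a - b| + c * |a - b| := by linarith [hglip a b]
      _ = (1 + c) * |a - b| := by ring
  have hmono : StrictMono x := by
    intro a b hab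
    have h2 : x b - x a = (b - a) - (g b - g a) := by simp only [hxg]; ring
    have h3 : |g b - g a| ≤ c * |b - a| := hglip b a
    have h4 : |b - a| = b - a := abs_of_pos (by linarith)
    have := abs_le.mp h3
    rw [h4] at this
    nlinarith [this.2]
  have hinj : Function.Injective x := hmono.injective
  have hsurj : Function.Surjective x := by
    intro z
    set F : ℝ → ℝ := fun y => z + g y with hF
    have hlipF : LipschitzWith (Real.toNNReal c) F := by
      apply LipschitzWith.of_dist_le_mul
      intro a b
      simp only [hF, Real.dist_eq, Real.coe_toNNReal c hc0.le]
      have : z + g a - (z + g b) = g a - g b := by ring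
      rw [this]
      exact hglip a b
    have hcontr : ContractingWith (Real.toNNReal c) F := by
      constructor
      · rw [← Real.toNNReal_one]
        exact (Real.toNNReal_lt_toNNReal_iff (by norm_num)).mpr hc1
      · exact hlipF
    refine ⟨hcontr.fixedPoint F, ?_⟩
    have hy : F (hcontr.fixedPoint F) = hcontr.fixedPoint F := hcontr.fixedPoint_isFixedPt
    simp only [hF] at hy
    simp only [hxg]
    linarith
  refine ⟨hmono, ⟨hinj, hsurj⟩, (1 + c) / (1 - c), ?_, ?_⟩
  · rw [le_div_iff₀ (by linarith)]; linarith
  · intro a b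
    constructor
    · have h1 : 1 / ((1 + c) / (1 - c)) = (1 - c) / (1 + c) := by
        rw [one_div_div]
      rw [h1]
      calc (1 - c) / (1 + c) * |a - b| ≤ (1 - c) * |a - b| := by
            apply mul_le_mul_of_nonneg_right _ (abs_nonneg _)
            rw [div_le_iff₀ (by linarith)]
            nlinarith
        _ ≤ |x a - x b| := hlow a b
    · calc |x a - x b| ≤ (1 + c) * |a - b| := hup a b
        _ ≤ (1 + c) / (1 - c) * |a - b| := by
            apply mul_le_mul_of_nonneg_right _ (abs_nonneg _)
            rw [le_div_iff₀ (by linarith)]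
            nlinarith
end
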